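/- For any singular transformation a of {1,...,n}, the subsemigroup generated by the set of conjugates {g⁻¹ag : g ∈ S_n} is generated by idempotents. -/

import Mathlib

/-- The full transformation monoid on `{1,...,n}`, modeled as `Function.End (Fin n)`
(multiplication is composition). -/
abbrev Tn (n : ℕ) := Function.End (Fin n)

/-- A permutation viewed as a transformation. -/
def ofPerm {n : ℕ} (g : Equiv.Perm (Fin n)) : Tn n := ⇑g

/-- The rank of a transformation: the size of its image. -/
def rnk {n : ℕ} (a : Tn n) : ℕ := (Finset.univ.image a).card

/-- The symmetric group embedded in `Tn n` as a set. -/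
def perms (n : ℕ) : Set (Tn n) := Set.range (fun g : Equiv.Perm (Fin n) => ofPerm g)

/-- The `S_n`-conjugacy class of a transformation. -/
def conjClass {n : ℕ} (t : Tn n) : Set (Tn n) :=
  {s | ∃ g : Equiv.Perm (Fin n), s = ofPerm g⁻¹ * t * ofPerm g}

/-!
Let `S` be the semigroup generated by the conjugates of `a`; it is stable under conjugation by
`S_n`, and it is generated by its idempotents. Indeed, let `x ∈ S` be a conjugate of `a`. For some
permutation `p`, `e = p * x` is idempotent; `e ≠ 1` as `x` is singular, and `e ∈ S`: if `k` is the
order of `p`, then `e = e ^ k = p ^ k * s = s` for some `s ∈ S`. The conjugates of `e` are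
idempotents of `S`, and every `q * e` with `q ∈ S_n`, in particular `x = p⁻¹ * e`, lies in the
semigroup `T` they generate: if `e` fixes `t` and moves `u`, then `(t u) * e = f * e` for a
conjugate `f` of `e`, so `T` is stable under `q ↦ q * (t u)`. Every transposition of two fixed
points of `e` is a product of three such transpositions, a transposition of two moved points does
not change `q * e`, and transpositions generate `S_n`.
-/

theorem Equiv.Perm.exists_eqOn_of_injOn {α : Type*} [Finite α] {s : Set α} {f : α → α}
    (hf : s.InjOn f) : ∃ g : Equiv.Perm α, s.EqOn g f := by
  classical
  cases nonempty_fintype α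
  obtain ⟨g, hg⟩ := Set.MapsTo.exists_equiv_extend_of_card_eq (t := Finset.univ)
    Finset.card_univ.symm (fun x _ => Finset.mem_univ (f x)) hf
  exact ⟨g.trans (Equiv.subtypeUnivEquiv Finset.mem_univ), hg⟩

namespace Tn

variable {n : ℕ}

@[simp]
lemma mul_apply (x y : Tn n) (w : Fin n) : (x * y) w = x (y w) := rfl

@[simp]
lemma ofPerm_apply (g : Equiv.Perm (Fin n)) (x : Fin n) : ofPerm g x = g x := rfl

lemma ofPerm_mul (g h : Equiv.Perm (Fin n)) : ofPerm (g * h) = ofPerm g * ofPerm h := rfl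

lemma ofPerm_one : ofPerm (1 : Equiv.Perm (Fin n)) = 1 := rfl

lemma ofPerm_inv_mul_cancel_left (g : Equiv.Perm (Fin n)) (x : Tn n) :
    ofPerm g⁻¹ * (ofPerm g * x) = x := by
  rw [← mul_assoc, ← ofPerm_mul, inv_mul_cancel, ofPerm_one, one_mul]

lemma ofPerm_mul_inv_cancel_left (g : Equiv.Perm (Fin n)) (x : Tn n) :
    ofPerm g * (ofPerm g⁻¹ * x) = x := by
  simpa using ofPerm_inv_mul_cancel_left g⁻¹ x

def IsConjStable (S : Set (Tn n)) : Prop :=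
  ∀ x ∈ S, ∀ g : Equiv.Perm (Fin n), ofPerm g⁻¹ * x * ofPerm g ∈ S

lemma conj_mul (g : Equiv.Perm (Fin n)) (x y : Tn n) :
    ofPerm g⁻¹ * (x * y) * ofPerm g =
      (ofPerm g⁻¹ * x * ofPerm g) * (ofPerm g⁻¹ * y * ofPerm g) := by
  funext w
  simp

lemma isConjStable_conjClass (a : Tn n) : IsConjStable (conjClass a) := by
  rintro x ⟨h, rfl⟩ g
  exact ⟨h * g, by simp only [mul_inv_rev, ofPerm_mul, mul_assoc]⟩

lemma IsConjStable.closure {S : Set (Tn n)} (hS : IsConjStable S) :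
    IsConjStable (Subsemigroup.closure S : Set (Tn n)) := by
  intro x hx g
  induction hx using Subsemigroup.closure_induction with
  | mem y hy => exact Subsemigroup.subset_closure (hS y hy g)
  | mul y z _ _ hy hz => rw [conj_mul]; exact Subsemigroup.mul_mem _ hy hz

lemma exists_pow_succ_eq_perm_pow_mul {S : Subsemigroup (Tn n)} (hS : IsConjStable (S : Set (Tn n)))
    (p : Equiv.Perm (Fin n)) {c : Tn n} (hc : c ∈ S) (k : ℕ) :
    ∃ s ∈ S, (ofPerm p * c) ^ (k + 1) = ofPerm (p ^ (k + 1)) * s := by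
  induction k with
  | zero => exact ⟨c, hc, by rw [pow_one, pow_one]⟩
  | succ k ih =>
    obtain ⟨s, hs, hpow⟩ := ih
    refine ⟨(ofPerm p⁻¹ * s * ofPerm p) * c, S.mul_mem (hS s hs p) hc, ?_⟩
    calc (ofPerm p * c) ^ (k + 1 + 1) = ofPerm (p ^ (k + 1)) * s * (ofPerm p * c) := by
          rw [pow_succ, hpow]
      _ = ofPerm (p ^ (k + 1 + 1) * p⁻¹) * s * ofPerm p * c := by
          rw [pow_succ p (k + 1), mul_inv_cancel_right, mul_assoc _ (ofPerm p)]
      _ = ofPerm (p ^ (k + 1 + 1)) * (ofPerm p⁻¹ * s * ofPerm p * c) := by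
          simp only [ofPerm_mul, mul_assoc]

lemma mem_of_isIdempotentElem_perm_mul {S : Subsemigroup (Tn n)}
    (hS : IsConjStable (S : Set (Tn n))) {p : Equiv.Perm (Fin n)} {c : Tn n} (hc : c ∈ S)
    (hpc : IsIdempotentElem (ofPerm p * c)) : ofPerm p * c ∈ S := by
  obtain ⟨k, hk⟩ : ∃ k, orderOf p = k + 1 := Nat.exists_eq_add_one.mpr (orderOf_pos p)
  obtain ⟨s, hs, hpow⟩ := exists_pow_succ_eq_perm_pow_mul hS p hc k
  rwa [← hpc.pow_succ_eq k, hpow, ← hk, pow_orderOf_eq_one, ofPerm_one, one_mul]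

lemma exists_isIdempotentElem_perm_mul (x : Tn n) :
    ∃ p : Equiv.Perm (Fin n), IsIdempotentElem (ofPerm p * x) := by
  rcases isEmpty_or_nonempty (Fin n) with _ | _
  · exact ⟨1, funext fun w => isEmptyElim w⟩
  have hinv : ∀ w, x (Function.invFun x (x w)) = x w := fun w => Function.invFun_eq ⟨w, rfl⟩
  obtain ⟨p, hp⟩ : ∃ p : Equiv.Perm (Fin n), (Set.range x).EqOn p (Function.invFun x) := by
    refine Equiv.Perm.exists_eqOn_of_injOn ?_
    rintro _ ⟨v, rfl⟩ _ ⟨w, rfl⟩ h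
    rw [← hinv v, ← hinv w, h]
  refine ⟨p, funext fun w => ?_⟩
  simp only [mul_apply, ofPerm_apply, hp ⟨w, rfl⟩, hinv]

/-- `r⁻¹ * e * r` sends `t` to `u` and fixes every other point of the image of `e`. -/
lemma swap_mul_eq_conj_mul {e : Tn n} (he : IsIdempotentElem e) {t u : Fin n} (ht : e t = t)
    (hu : e u ≠ u) :
    ofPerm (Equiv.swap t u) * e =
      ofPerm (Equiv.swap (e u) u * Equiv.swap t (e u))⁻¹ * e *
        ofPerm (Equiv.swap (e u) u * Equiv.swap t (e u)) * e := by
  have hfix : ∀ w, e (e w) = e w := fun w => congrFun he w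
  have hne : ∀ s, e s = s → s ≠ u := fun s hs h => hu (h ▸ hs)
  funext w
  simp only [mul_apply, ofPerm_apply]
  rw [eq_comm, Equiv.Perm.inv_eq_iff_eq]
  have hw := hfix w
  have heu := hfix u
  have hsu := hne _ hw
  have htu := hne t ht
  have ht₁u := hne _ heu
  generalize e w = s at hw hsu ⊢
  generalize ht₁ : e u = t₁ at heu ht₁u ⊢
  clear hfix he hne
  simp only [Equiv.Perm.mul_apply, Equiv.swap_apply_def]
  split_ifs <;> subst_vars <;> simp_all

lemma isIdempotentElem_conj {e : Tn n} (he : IsIdempotentElem e) (g : Equiv.Perm (Fin n)) :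
    IsIdempotentElem (ofPerm g⁻¹ * e * ofPerm g) := by
  rw [IsIdempotentElem]
  simp only [mul_assoc, ofPerm_mul_inv_cancel_left]
  rw [← mul_assoc e e, he.eq]

lemma perm_mul_conj_ne_one {a : Tn n} (ha : ¬ Function.Bijective a) (p g : Equiv.Perm (Fin n)) :
    ofPerm p * (ofPerm g⁻¹ * a * ofPerm g) ≠ 1 := by
  intro h
  have hbij : Function.Bijective (ofPerm p * (ofPerm g⁻¹ * a * ofPerm g)) := by
    rw [h]
    exact Function.bijective_id
  exact ha <| (g⁻¹.bijective.of_comp_iff' a).mp <|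
    (Function.Bijective.of_comp_iff _ g.bijective).mp <| (p.bijective.of_comp_iff' _).mp hbij

lemma perm_mul_swap_mem {T : Subsemigroup (Tn n)} {e : Tn n} (he : IsIdempotentElem e)
    (heT : ∀ g : Equiv.Perm (Fin n), ofPerm g⁻¹ * e * ofPerm g ∈ T) {t u : Fin n}
    (ht : e t = t) (hu : e u ≠ u) {q : Equiv.Perm (Fin n)} (hq : ofPerm q * e ∈ T) :
    ofPerm (q * Equiv.swap t u) * e ∈ T := by
  obtain ⟨r, hr⟩ : ∃ r : Equiv.Perm (Fin n),
      ofPerm (Equiv.swap t u) * e = ofPerm r⁻¹ * e * ofPerm r * e :=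
    ⟨_, swap_mul_eq_conj_mul he ht hu⟩
  have hconj : ofPerm (q * Equiv.swap t u) * e =
      (ofPerm (r * q⁻¹)⁻¹ * e * ofPerm (r * q⁻¹)) * (ofPerm q * e) := by
    rw [ofPerm_mul, mul_assoc, hr]
    simp only [mul_inv_rev, inv_inv, ofPerm_mul, mul_assoc, ofPerm_inv_mul_cancel_left]
  rw [hconj]
  exact T.mul_mem (heT _) hq

lemma perm_mul_mem {T : Subsemigroup (Tn n)} {e : Tn n} (he : IsIdempotentElem e) (he1 : e ≠ 1)
    (heT : ∀ g : Equiv.Perm (Fin n), ofPerm g⁻¹ * e * ofPerm g ∈ T) (q : Equiv.Perm (Fin n)) :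
    ofPerm q * e ∈ T := by
  obtain ⟨z, hz⟩ : ∃ z, e z ≠ z := by
    by_contra! h
    exact he1 (funext h)
  induction q using Equiv.Perm.swap_induction_on' with
  | one => simpa [ofPerm_one] using heT 1
  | mul_swap q x y hxy hq =>
    by_cases hx : e x = x <;> by_cases hy : e y = y
    · have hxz : x ≠ z := fun h => hz (h ▸ hx)
      have hyz : y ≠ z := fun h => hz (h ▸ hy)
      rw [← Equiv.swap_mul_swap_mul_swap hyz hxy.symm, Equiv.swap_comm z x, ← mul_assoc,
        ← mul_assoc]
      exact perm_mul_swap_mem he heT hx hz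
        (perm_mul_swap_mem he heT hy hz (perm_mul_swap_mem he heT hx hz hq))
    · exact perm_mul_swap_mem he heT hx hy hq
    · rw [Equiv.swap_comm]
      exact perm_mul_swap_mem he heT hy hx hq
    · convert hq using 1
      funext w
      have hfix : e (e w) = e w := congrFun he w
      simp only [mul_apply, ofPerm_apply, Equiv.Perm.mul_apply]
      have hwx : e w ≠ x := fun h => hx (h ▸ hfix)
      have hwy : e w ≠ y := fun h => hy (h ▸ hfix)
      rw [Equiv.swap_apply_of_ne_of_ne hwx hwy]

end Tn

open Tn in
/-- For singular `a`, the semigroup generated by the `S_n`-conjugates of `a` is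
idempotent generated. -/
theorem stmt12 (n : ℕ) (a : Tn n) (ha : ¬ Function.Bijective a) :
    ∃ E : Set (Tn n), (∀ x ∈ E, x * x = x) ∧
      Subsemigroup.closure (conjClass a) = Subsemigroup.closure E := by
  set S := Subsemigroup.closure (conjClass a)
  have hS : IsConjStable (S : Set (Tn n)) := (isConjStable_conjClass a).closure
  refine ⟨{x | IsIdempotentElem x ∧ x ∈ S}, fun x hx => hx.1, le_antisymm ?_ ?_⟩
  · rw [Subsemigroup.closure_le]
    rintro _ ⟨g, rfl⟩
    set x := ofPerm g⁻¹ * a * ofPerm g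
    obtain ⟨p, hp⟩ := exists_isIdempotentElem_perm_mul x
    have hpS : ofPerm p * x ∈ S :=
      mem_of_isIdempotentElem_perm_mul hS (Subsemigroup.subset_closure ⟨g, rfl⟩) hp
    rw [← ofPerm_inv_mul_cancel_left p x]
    refine perm_mul_mem hp (perm_mul_conj_ne_one ha p g)
      (fun r => Subsemigroup.subset_closure ?_) p⁻¹
    exact ⟨isIdempotentElem_conj hp r, hS _ hpS r⟩
  · exact Subsemigroup.closure_le.mpr fun x hx => hx.2
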